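/- Let G be a finite directed graph and v a vertex with r(v) ≥ 2 reachable vertices. Writing a = d+2 and b = γ̃_{d+1}(v) + a·(n_d(v) − 1) − f_d(v) for some d ≥ 0 with n_d(v) ≥ 1, we have b > 0 and f(v) ≥ a·(r(v) − 1) − b. -/

import Mathlib

open Finset

variable {V : Type*}

/-- `steps r n v w` : there is a walk of length `n` from `v` to `w` along relation `r`. -/
def steps (r : V → V → Prop) : ℕ → V → V → Prop
  | 0, v, w => v = w
  | n+1, v, w => ∃ u, r v u ∧ steps r n u w

/-- `w` is reachable from `v`. -/
def reach (r : V → V → Prop) (v w : V) : Prop := ∃ n, steps r n v w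

/-- shortest-path distance (number of edges). -/
noncomputable def ddist (r : V → V → Prop) (v w : V) : ℕ := sInf {n | steps r n v w}

open scoped Classical in
/-- set of vertices reachable from `v`. -/
noncomputable def Rset (r : V → V → Prop) [Fintype V] (v : V) : Finset V :=
  univ.filter (fun w => reach r v w)

/-- number of vertices reachable from `v`. -/
noncomputable def rnum (r : V → V → Prop) [Fintype V] (v : V) : ℕ := (Rset r v).card

/-- farness of `v`. -/
noncomputable def farn (r : V → V → Prop) [Fintype V] (v : V) : ℕ :=
  ∑ w ∈ Rset r v, ddist r v w

open scoped Classical in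
/-- ball of radius `d` around `v`. -/
noncomputable def ball (r : V → V → Prop) [Fintype V] (v : V) (d : ℕ) : Finset V :=
  univ.filter (fun w => reach r v w ∧ ddist r v w ≤ d)

/-- number of vertices at distance at most `d` from `v`. -/
noncomputable def nball (r : V → V → Prop) [Fintype V] (v : V) (d : ℕ) : ℕ := (ball r v d).card

open scoped Classical in
/-- set of vertices at distance exactly `d` from `v`. -/
noncomputable def sphere (r : V → V → Prop) [Fintype V] (v : V) (d : ℕ) : Finset V :=
  univ.filter (fun w => reach r v w ∧ ddist r v w = d)

/-- number of vertices at distance exactly `d` from `v`. -/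
noncomputable def gam (r : V → V → Prop) [Fintype V] (v : V) (d : ℕ) : ℕ := (sphere r v d).card

/-- farness of `v` restricted to distance at most `d`. -/
noncomputable def fd (r : V → V → Prop) [Fintype V] (v : V) (d : ℕ) : ℕ :=
  ∑ w ∈ ball r v d, ddist r v w

open scoped Classical in
/-- out-degree of `u`. -/
noncomputable def outdeg (r : V → V → Prop) [Fintype V] (u : V) : ℕ :=
  (univ.filter (fun w => r u w)).card

/-- `gtil r v d` = upper bound γ̃_{d+1}(v) = Σ_{u : dist(v,u)=d} outdeg(u). -/
noncomputable def gtil (r : V → V → Prop) [Fintype V] (v : V) (d : ℕ) : ℕ :=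
  ∑ u ∈ sphere r v d, outdeg r u

/-!
Split the reachable vertices into the ball of radius `d + 1` and the rest. Inside the ball,
`f_{d+1} = f_d + (d+1)·γ_{d+1}` and `n_{d+1} = n_d + γ_{d+1}`; every vertex outside it is at
distance at least `d + 2 = a`. Hence `f ≥ f_d − γ_{d+1} + a·(r − n_d)`, and the sphere of radius
`d + 1` consists of out-neighbours of the sphere of radius `d`, so `γ_{d+1} ≤ γ̃_{d+1}`; this is
the farness bound. For `b > 0`: `f_d ≤ d·(n_d − 1)` gives `b ≥ γ̃_{d+1} + 2(n_d − 1)`, and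
`n_d + γ̃_{d+1} ≥ n_{d+1} ≥ 2` because some vertex lies at distance exactly `1`.
-/

section Walks

variable (r : V → V → Prop)

lemma steps_one {v w : V} : steps r 1 v w ↔ r v w := by
  simp [steps]

lemma steps_add {m n : ℕ} {u v w : V} (huv : steps r m u v) (hvw : steps r n v w) :
    steps r (m + n) u w := by
  induction m generalizing u with
  | zero => cases huv; simpa using hvw
  | succ m ih =>
    obtain ⟨x, hux, hxv⟩ := huv
    rw [Nat.add_right_comm]
    exact ⟨x, hux, ih hxv⟩

lemma steps_split {k : ℕ} {v w : V} (h : steps r k v w) {j : ℕ} (hj : j ≤ k) :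
    ∃ u, steps r j v u ∧ steps r (k - j) u w := by
  induction k generalizing v j with
  | zero =>
    obtain rfl : j = 0 := by omega
    exact ⟨v, rfl, h⟩
  | succ k ih =>
    obtain ⟨x, hvx, hxw⟩ := h
    cases j with
    | zero => exact ⟨v, rfl, x, hvx, hxw⟩
    | succ j =>
      obtain ⟨u, hxu, huw⟩ := ih hxw (by omega : j ≤ k)
      exact ⟨u, ⟨x, hvx, hxu⟩, by simpa using huw⟩

lemma reach_self (v : V) : reach r v v := ⟨0, rfl⟩

lemma ddist_le_of_steps {n : ℕ} {v w : V} (h : steps r n v w) : ddist r v w ≤ n :=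
  Nat.sInf_le h

lemma steps_ddist {v w : V} (h : reach r v w) : steps r (ddist r v w) v w :=
  Nat.sInf_mem h

lemma ddist_self (v : V) : ddist r v v = 0 :=
  Nat.le_zero.mp (ddist_le_of_steps r (rfl : steps r 0 v v))

/-- Every initial segment of a shortest path is a shortest path. -/
lemma exists_ddist_eq_of_le {v w : V} (h : reach r v w) {j : ℕ} (hj : j ≤ ddist r v w) :
    ∃ u, reach r v u ∧ ddist r v u = j ∧ steps r (ddist r v w - j) u w := by
  obtain ⟨u, hvu, huw⟩ := steps_split r (steps_ddist r h) hj
  refine ⟨u, ⟨j, hvu⟩, le_antisymm (ddist_le_of_steps r hvu) ?_, huw⟩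
  have := ddist_le_of_steps r (steps_add r (steps_ddist r ⟨j, hvu⟩) huw)
  omega

end Walks

section Balls

open scoped Classical

variable (r : V → V → Prop) [Fintype V] (v : V) (d : ℕ)

@[simp] lemma mem_Rset {w : V} : w ∈ Rset r v ↔ reach r v w := by
  simp [Rset]

@[simp] lemma mem_ball {w : V} : w ∈ ball r v d ↔ reach r v w ∧ ddist r v w ≤ d := by
  simp [ball]

@[simp] lemma mem_sphere {w : V} : w ∈ sphere r v d ↔ reach r v w ∧ ddist r v w = d := by
  simp [sphere]

lemma self_mem_ball : v ∈ ball r v d := by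
  simp [reach_self, ddist_self]

lemma one_le_nball : 1 ≤ nball r v d :=
  card_pos.mpr ⟨v, self_mem_ball r v d⟩

lemma ball_subset_Rset : ball r v d ⊆ Rset r v := fun _ hw => by
  simp only [mem_ball, mem_Rset] at hw ⊢
  exact hw.1

lemma nball_le_rnum : nball r v d ≤ rnum r v :=
  card_le_card (ball_subset_Rset r v d)

lemma ball_subset_ball_succ : ball r v d ⊆ ball r v (d + 1) := fun _ hw => by
  simp only [mem_ball] at hw ⊢
  exact ⟨hw.1, by omega⟩

lemma ball_succ_sdiff_ball : ball r v (d + 1) \ ball r v d = sphere r v (d + 1) := by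
  ext w
  simp only [mem_sdiff, mem_ball, mem_sphere]
  constructor
  · rintro ⟨⟨hw, hle⟩, hnot⟩
    exact ⟨hw, by by_contra hne; exact hnot ⟨hw, by omega⟩⟩
  · rintro ⟨hw, hdist⟩
    exact ⟨⟨hw, hdist.le⟩, fun h => by omega⟩

lemma nball_succ : nball r v (d + 1) = nball r v d + gam r v (d + 1) := by
  have hsub := ball_subset_ball_succ r v d
  have hcard := card_sdiff_of_subset hsub
  rw [ball_succ_sdiff_ball] at hcard
  have := card_le_card hsub
  unfold nball gam
  omega

lemma fd_succ : fd r v (d + 1) = fd r v d + (d + 1) * gam r v (d + 1) := by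
  have hsum := sum_sdiff (f := ddist r v) (ball_subset_ball_succ r v d)
  rw [ball_succ_sdiff_ball, sum_congr rfl fun w hw => ((mem_sphere r v _).mp hw).2,
    sum_const, smul_eq_mul] at hsum
  rw [fd, fd, ← hsum, gam]
  ring

lemma fd_add_le_mul : fd r v d + d ≤ d * nball r v d := by
  have hv := self_mem_ball r v d
  have hsum : fd r v d = ∑ w ∈ (ball r v d).erase v, ddist r v w :=
    (sum_erase _ (ddist_self r v)).symm
  have hle : ∑ w ∈ (ball r v d).erase v, ddist r v w ≤ #((ball r v d).erase v) • d :=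
    sum_le_card_nsmul _ _ _ fun w hw => ((mem_ball r v d).mp (mem_of_mem_erase hw)).2
  rw [nball, ← card_erase_add_one hv]
  rw [smul_eq_mul] at hle
  linarith

lemma fd_add_mul_le_farn : fd r v d + (d + 1) * (rnum r v - nball r v d) ≤ farn r v := by
  have hsub := ball_subset_Rset r v d
  have hfar : ∀ w ∈ Rset r v \ ball r v d, d + 1 ≤ ddist r v w := by
    intro w hw
    simp only [mem_sdiff, mem_Rset, mem_ball, not_and, not_le] at hw
    exact hw.2 hw.1
  have htail := card_nsmul_le_sum _ _ _ hfar
  rw [card_sdiff_of_subset hsub, smul_eq_mul] at htail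
  rw [farn, ← sum_sdiff hsub, fd, rnum, nball]
  linarith

lemma sphere_succ_subset_biUnion :
    sphere r v (d + 1) ⊆ (sphere r v d).biUnion fun u => univ.filter (r u ·) := by
  intro w hw
  obtain ⟨hw, hdist⟩ := (mem_sphere r v _).mp hw
  obtain ⟨u, hu, hud, huw⟩ := exists_ddist_eq_of_le r hw (by omega : d ≤ ddist r v w)
  rw [hdist, Nat.add_sub_cancel_left, steps_one] at huw
  exact mem_biUnion.mpr ⟨u, (mem_sphere r v d).mpr ⟨hu, hud⟩, by simpa using huw⟩

lemma gam_succ_le_gtil : gam r v (d + 1) ≤ gtil r v d :=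
  (card_le_card (sphere_succ_subset_biUnion r v d)).trans card_biUnion_le

lemma two_le_nball_succ (hr : 2 ≤ rnum r v) : 2 ≤ nball r v (d + 1) := by
  obtain ⟨w, hw, hwv⟩ := exists_mem_ne hr v
  rw [mem_Rset] at hw
  have hpos : 1 ≤ ddist r v w := by
    by_contra! h0
    have := steps_ddist r hw
    rw [Nat.lt_one_iff.mp h0] at this
    exact hwv this.symm
  obtain ⟨u, hu, hud, -⟩ := exists_ddist_eq_of_le r hw hpos
  refine one_lt_card.mpr ⟨v, self_mem_ball r v _, u, ?_, ?_⟩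
  · simp [hu, hud]
  · rintro rfl
    simp [ddist_self] at hud

end Balls

theorem b_pos_and_farness_bound_general [Fintype V] (r : V → V → Prop) (v : V) (d : ℕ)
    (hr : 2 ≤ rnum r v) :
    0 < (gtil r v d : ℤ) + (d + 2) * ((nball r v d : ℤ) - 1) - (fd r v d : ℤ) ∧
    (farn r v : ℤ) ≥
      (d + 2) * ((rnum r v : ℤ) - 1)
        - ((gtil r v d : ℤ) + (d + 2) * ((nball r v d : ℤ) - 1) - (fd r v d : ℤ)) := by
  have hn := one_le_nball r v d
  have hfd := fd_add_le_mul r v d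
  have hgam := gam_succ_le_gtil r v d
  have hnsucc := nball_succ r v d
  have hfsucc := fd_succ r v d
  have hfarn := fd_add_mul_le_farn r v (d + 1)
  have hn2 := two_le_nball_succ r v d hr
  zify [nball_le_rnum r v (d + 1)] at hn hfd hgam hnsucc hfsucc hfarn hn2
  rw [hfsucc, hnsucc] at hfarn
  constructor <;> linarith

theorem b_pos_and_farness_bound [Fintype V] (r : V → V → Prop) (v : V) (d : ℕ)
    (hr : 2 ≤ rnum r v) (hn : 1 ≤ nball r v d) :
    0 < (gtil r v d : ℤ) + (d + 2) * ((nball r v d : ℤ) - 1) - (fd r v d : ℤ) ∧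
    (farn r v : ℤ) ≥
      (d + 2) * ((rnum r v : ℤ) - 1)
        - ((gtil r v d : ℤ) + (d + 2) * ((nball r v d : ℤ) - 1) - (fd r v d : ℤ)) :=
  b_pos_and_farness_bound_general r v d hr
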